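/- For Hermitian positive semidefinite matrices E and M of size r×r and any unitary matrix Ω of size r×r, tr(Ωᴴ E Ω M) ≤ Σᵢ δ_{E,i} δ_{M,i}, where δ_{E,1} ≥ ... ≥ δ_{E,r} and δ_{M,1} ≥ ... ≥ δ_{M,r} are the eigenvalues of E and M sorted in descending order. -/
import Mathlib

open Finset

private lemma vn_reorder {M : Type*} [AddCommMonoid M] (r : ℕ) (f : ℕ → ℕ → ℕ → ℕ → M) :
    ∑ i ∈ range r, ∑ j ∈ range r, ∑ k ∈ range r, ∑ l ∈ range r, f i j k l
      = ∑ k ∈ range r, ∑ l ∈ range r, ∑ i ∈ range r, ∑ j ∈ range r, f i j k l := by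
  calc ∑ i ∈ range r, ∑ j ∈ range r, ∑ k ∈ range r, ∑ l ∈ range r, f i j k l
      = ∑ i ∈ range r, ∑ k ∈ range r, ∑ j ∈ range r, ∑ l ∈ range r, f i j k l :=
        Finset.sum_congr rfl fun i _ => Finset.sum_comm
    _ = ∑ k ∈ range r, ∑ i ∈ range r, ∑ j ∈ range r, ∑ l ∈ range r, f i j k l :=
        Finset.sum_comm
    _ = ∑ k ∈ range r, ∑ i ∈ range r, ∑ l ∈ range r, ∑ j ∈ range r, f i j k l :=
        Finset.sum_congr rfl fun k _ => Finset.sum_congr rfl fun i _ => Finset.sum_comm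
    _ = ∑ k ∈ range r, ∑ l ∈ range r, ∑ i ∈ range r, ∑ j ∈ range r, f i j k l :=
        Finset.sum_congr rfl fun k _ => Finset.sum_comm


private lemma vn_reorder3 {M : Type*} [AddCommMonoid M] (r : ℕ) (f : ℕ → ℕ → ℕ → M) :
    ∑ k ∈ range r, ∑ l ∈ range r, ∑ i ∈ range r, f k l i
      = ∑ i ∈ range r, ∑ k ∈ range r, ∑ l ∈ range r, f k l i := by
  calc ∑ k ∈ range r, ∑ l ∈ range r, ∑ i ∈ range r, f k l i
      = ∑ k ∈ range r, ∑ i ∈ range r, ∑ l ∈ range r, f k l i :=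
        Finset.sum_congr rfl fun k _ => Finset.sum_comm
    _ = ∑ i ∈ range r, ∑ k ∈ range r, ∑ l ∈ range r, f k l i := Finset.sum_comm

private lemma vn_key (r : ℕ) (a b : ℕ → ℝ) (S : ℕ → ℕ → ℝ)
    (haA : Antitone a) (hbA : Antitone b)
    (har : a r = 0) (hbr : b r = 0)
    (hS0 : ∀ i j, 0 ≤ S i j)
    (hrow : ∀ i, ∑ j ∈ range r, S i j ≤ 1)
    (hcol : ∀ j, ∑ i ∈ range r, S i j ≤ 1) :
    ∑ i ∈ range r, ∑ j ∈ range r, a i * b j * S i j ≤ ∑ i ∈ range r, a i * b i := by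
  set d : ℕ → ℝ := fun k => a k - a (k + 1) with hd_def
  set e : ℕ → ℝ := fun k => b k - b (k + 1) with he_def
  have hd : ∀ k, 0 ≤ d k := fun k => sub_nonneg.2 (haA (Nat.le_succ k))
  have he : ∀ k, 0 ≤ e k := fun k => sub_nonneg.2 (hbA (Nat.le_succ k))
  have hsum : ∀ (c : ℕ → ℝ), c r = 0 → ∀ i, i ≤ r →
      c i = ∑ k ∈ range r, if i ≤ k then c k - c (k+1) else 0 := by
    intro c hc i hi
    rw [← Finset.sum_filter]
    have hfil : (range r).filter (fun k => i ≤ k) = Finset.Ico i r := by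
      ext k; simp [Finset.mem_Ico, and_comm]
    rw [hfil, Finset.sum_Ico_eq_sub _ hi, Finset.sum_range_sub' c, Finset.sum_range_sub' c, hc]
    ring
  have hsa : ∀ i, i ≤ r → a i = ∑ k ∈ range r, if i ≤ k then d k else 0 := hsum a har
  have hsb : ∀ j, j ≤ r → b j = ∑ l ∈ range r, if j ≤ l then e l else 0 := hsum b hbr
  set G : ℕ → ℕ → ℝ := fun k l => ∑ i ∈ range r, (if i ≤ k then (1:ℝ) else 0)
      * ∑ j ∈ range r, (if j ≤ l then (1:ℝ) else 0) * S i j with hG_def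
  set C : ℕ → ℕ → ℝ := fun k l => ∑ i ∈ range r, (if i ≤ k then (1:ℝ) else 0)
      * (if i ≤ l then (1:ℝ) else 0) with hC_def
  -- inner sums bounded by 1 and nonneg
  have hinb : ∀ l i, ∑ j ∈ range r, (if j ≤ l then (1:ℝ) else 0) * S i j ≤ 1 := by
    intro l i
    refine le_trans (Finset.sum_le_sum fun j _ => ?_) (hrow i)
    split_ifs <;> simp [hS0 i j]
  have hinb' : ∀ k j, ∑ i ∈ range r, (if i ≤ k then (1:ℝ) else 0) * S i j ≤ 1 := by
    intro k j
    refine le_trans (Finset.sum_le_sum fun i _ => ?_) (hcol j)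
    split_ifs <;> simp [hS0 i j]
  have hGC : ∀ k l, G k l ≤ C k l := by
    intro k l
    rcases le_total k l with hkl | hlk
    · refine Finset.sum_le_sum fun i _ => ?_
      by_cases h : i ≤ k
      · simp only [if_pos h, if_pos (h.trans hkl), one_mul, mul_one]
        exact hinb l i
      · simp only [if_neg h, zero_mul, le_refl]
    · have hswap : G k l = ∑ j ∈ range r, (if j ≤ l then (1:ℝ) else 0)
          * ∑ i ∈ range r, (if i ≤ k then (1:ℝ) else 0) * S i j := by
        rw [hG_def]
        simp only [Finset.mul_sum]
        rw [Finset.sum_comm]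
        exact Finset.sum_congr rfl fun j _ => Finset.sum_congr rfl fun i _ => by ring
      have hmid : ∑ j ∈ range r, (if j ≤ l then (1:ℝ) else 0)
            * ∑ i ∈ range r, (if i ≤ k then (1:ℝ) else 0) * S i j
          ≤ ∑ j ∈ range r, (if j ≤ l then (1:ℝ) else 0) := by
        refine Finset.sum_le_sum fun j _ => ?_
        by_cases h : j ≤ l
        · simp only [if_pos h, one_mul]; exact hinb' k j
        · simp only [if_neg h, zero_mul, le_refl]
      have hCl : C k l = ∑ j ∈ range r, (if j ≤ l then (1:ℝ) else 0) := by
        rw [hC_def]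
        refine Finset.sum_congr rfl fun i _ => ?_
        by_cases h : i ≤ l
        · simp [h, h.trans hlk]
        · simp [h]
      rw [hswap, hCl]
      exact hmid
  -- main chain
  calc ∑ i ∈ range r, ∑ j ∈ range r, a i * b j * S i j
      = ∑ i ∈ range r, ∑ j ∈ range r, ∑ k ∈ range r, ∑ l ∈ range r,
          (if i ≤ k then d k else 0) * (if j ≤ l then e l else 0) * S i j := by
        refine Finset.sum_congr rfl fun i hi => Finset.sum_congr rfl fun j hj => ?_
        rw [hsa i (mem_range.1 hi).le, hsb j (mem_range.1 hj).le, Finset.sum_mul_sum,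
          Finset.sum_mul]
        exact Finset.sum_congr rfl fun k _ => (Finset.sum_mul _ _ _)
    _ = ∑ k ∈ range r, ∑ l ∈ range r, ∑ i ∈ range r, ∑ j ∈ range r,
          (if i ≤ k then d k else 0) * (if j ≤ l then e l else 0) * S i j := vn_reorder r _
    _ = ∑ k ∈ range r, ∑ l ∈ range r, d k * e l * G k l := by
        refine Finset.sum_congr rfl fun k _ => Finset.sum_congr rfl fun l _ => ?_
        rw [hG_def]
        simp only [Finset.mul_sum]
        refine Finset.sum_congr rfl fun i _ => Finset.sum_congr rfl fun j _ => ?_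
        split_ifs <;> ring
    _ ≤ ∑ k ∈ range r, ∑ l ∈ range r, d k * e l * C k l := by
        refine Finset.sum_le_sum fun k _ => Finset.sum_le_sum fun l _ => ?_
        exact mul_le_mul_of_nonneg_left (hGC k l) (mul_nonneg (hd k) (he l))
    _ = ∑ k ∈ range r, ∑ l ∈ range r, ∑ i ∈ range r,
          (if i ≤ k then d k else 0) * (if i ≤ l then e l else 0) := by
        rw [hC_def]
        simp only [Finset.mul_sum]
        refine Finset.sum_congr rfl fun k _ => Finset.sum_congr rfl fun l _ =>
          Finset.sum_congr rfl fun i _ => ?_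
        split_ifs <;> ring
    _ = ∑ i ∈ range r, ∑ k ∈ range r, ∑ l ∈ range r,
          (if i ≤ k then d k else 0) * (if i ≤ l then e l else 0) := vn_reorder3 r _
    _ = ∑ i ∈ range r, a i * b i := by
        refine Finset.sum_congr rfl fun i hi => ?_
        rw [hsa i (mem_range.1 hi).le, hsb i (mem_range.1 hi).le, Finset.sum_mul_sum]

open ComplexOrder Matrix BigOperators

/-- Von Neumann trace inequality instance: for Hermitian PSD `E`, `M` and unitary `Ω`,
`tr(Ωᴴ E Ω M) ≤ ∑ i, δ_{E,i} δ_{M,i}` where `δE`, `δM` enumerate the eigenvalues of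
`E` and `M` in descending order. -/
theorem stmt0 {r : ℕ} (E M Ω : Matrix (Fin r) (Fin r) ℂ)
    (hE : E.PosSemidef) (hM : M.PosSemidef)
    (hΩ : Ωᴴ * Ω = 1)
    (δE δM : Fin r → ℝ)
    (hδE : Antitone δE) (hδM : Antitone δM)
    (hEeig : ∃ σ : Equiv.Perm (Fin r), δE = hE.1.eigenvalues ∘ σ)
    (hMeig : ∃ σ : Equiv.Perm (Fin r), δM = hM.1.eigenvalues ∘ σ) :
    Matrix.trace (Ωᴴ * E * Ω * M) ≤ ((∑ i, δE i * δM i : ℝ) : ℂ) := by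
  obtain ⟨σ, hσ⟩ := hEeig
  obtain ⟨π, hπ⟩ := hMeig
  have cancel : ∀ (A B : Matrix (Fin r) (Fin r) ℂ), A * B = 1 →
      ∀ X : Matrix (Fin r) (Fin r) ℂ, A * (B * X) = X := by
    intro A B h X; rw [← mul_assoc, h, one_mul]
  set U : Matrix (Fin r) (Fin r) ℂ := (hE.1.eigenvectorUnitary : Matrix (Fin r) (Fin r) ℂ) with hU_def
  set V : Matrix (Fin r) (Fin r) ℂ := (hM.1.eigenvectorUnitary : Matrix (Fin r) (Fin r) ℂ) with hV_def
  set lE : Fin r → ℝ := hE.1.eigenvalues with hlE_def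
  set lM : Fin r → ℝ := hM.1.eigenvalues with hlM_def
  set DE : Matrix (Fin r) (Fin r) ℂ := diagonal (Complex.ofReal ∘ lE) with hDE_def
  set DM : Matrix (Fin r) (Fin r) ℂ := diagonal (Complex.ofReal ∘ lM) with hDM_def
  set W : Matrix (Fin r) (Fin r) ℂ := star U * Ω * V with hW_def
  have hUU' : U * star U = 1 := Unitary.coe_mul_star_self hE.1.eigenvectorUnitary
  have hUU : star U * U = 1 := Unitary.coe_star_mul_self hE.1.eigenvectorUnitary
  have hVV' : V * star V = 1 := Unitary.coe_mul_star_self hM.1.eigenvectorUnitary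
  have hVV : star V * V = 1 := Unitary.coe_star_mul_self hM.1.eigenvectorUnitary
  have hΩs : star Ω * Ω = 1 := hΩ
  have hΩ' : Ω * star Ω = 1 := mul_eq_one_comm.mp hΩs
  have hWW : star W * W = 1 := by
    rw [hW_def]
    simp only [StarMul.star_mul, star_star, mul_assoc]
    rw [cancel U (star U) hUU', cancel (star Ω) Ω hΩs, hVV]
  have hWW' : W * star W = 1 := by
    rw [hW_def]
    simp only [StarMul.star_mul, star_star, mul_assoc]
    rw [cancel V (star V) hVV', cancel Ω (star Ω) hΩ', hUU]
  have hEdecomp : E = U * DE * star U := hE.1.spectral_theorem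
  have hMdecomp : M = V * DM * star V := hM.1.spectral_theorem
  -- step 1 : rewrite trace
  have htr : Matrix.trace (Ωᴴ * E * Ω * M) = Matrix.trace (star W * DE * W * DM) := by
    have h1 : Ωᴴ * E * Ω * M = (Ωᴴ * E * Ω * (V * DM)) * star V := by
      conv_lhs => rw [hMdecomp]
      simp only [mul_assoc]
    rw [h1, Matrix.trace_mul_comm]
    congr 1
    rw [hEdecomp, hW_def]
    simp only [StarMul.star_mul, star_star, ← Matrix.star_eq_conjTranspose, mul_assoc]
  -- step 2 : compute trace entrywise
  have hentry : Matrix.trace (star W * DE * W * DM)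
      = ∑ j, ∑ i, ((lE i * lM j * Complex.normSq (W i j) : ℝ) : ℂ) := by
    rw [Matrix.trace]
    refine Finset.sum_congr rfl fun j _ => ?_
    rw [Matrix.diag_apply, Matrix.mul_diagonal, Matrix.mul_apply, Finset.sum_mul]
    refine Finset.sum_congr rfl fun i _ => ?_
    rw [Matrix.mul_diagonal, Matrix.star_apply]
    have : ((Complex.normSq (W i j) : ℝ) : ℂ) = (starRingEnd ℂ) (W i j) * W i j :=
      Complex.normSq_eq_conj_mul_self
    push_cast
    rw [this]
    simp only [Function.comp_apply, RCLike.star_def]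
    ring
  -- row and column sums
  have hrow : ∀ i, ∑ j, Complex.normSq (W i j) = 1 := by
    intro i
    have h := congrFun (congrFun hWW' i) i
    rw [Matrix.mul_apply] at h
    have h1 : (1 : Matrix (Fin r) (Fin r) ℂ) i i = 1 := Matrix.one_apply_eq i
    rw [h1] at h
    have h2 : ∑ j, ((Complex.normSq (W i j) : ℝ) : ℂ) = 1 := by
      rw [← h]
      refine Finset.sum_congr rfl fun j _ => ?_
      rw [Matrix.star_apply, RCLike.star_def, Complex.mul_conj]
    exact_mod_cast h2
  have hcol : ∀ j, ∑ i, Complex.normSq (W i j) = 1 := by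
    intro j
    have h := congrFun (congrFun hWW j) j
    rw [Matrix.mul_apply] at h
    have h1 : (1 : Matrix (Fin r) (Fin r) ℂ) j j = 1 := Matrix.one_apply_eq j
    rw [h1] at h
    have h2 : ∑ i, ((Complex.normSq (W i j) : ℝ) : ℂ) = 1 := by
      rw [← h]
      refine Finset.sum_congr rfl fun i _ => ?_
      rw [Matrix.star_apply, RCLike.star_def, ← Complex.normSq_eq_conj_mul_self]
    exact_mod_cast h2
  -- restate trace as real number
  set T : ℝ := ∑ i, ∑ j, lE i * lM j * Complex.normSq (W i j) with hT_def
  have htrT : Matrix.trace (Ωᴴ * E * Ω * M) = (T : ℂ) := by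
    rw [htr, hentry, hT_def]
    rw [Finset.sum_comm]
    push_cast
    rfl
  -- reindex by the permutations
  set Sf : Fin r → Fin r → ℝ := fun i j => Complex.normSq (W (σ i) (π j)) with hSf_def
  have hreindex : T = ∑ i, ∑ j, δE i * δM j * Sf i j := by
    rw [hT_def, hσ, hπ, hSf_def]
    have inner : ∀ i : Fin r, ∑ j, lE i * lM (π j) * Complex.normSq (W i (π j))
        = ∑ j, lE i * lM j * Complex.normSq (W i j) := fun i =>
      Equiv.sum_comp π (fun j => lE i * lM j * Complex.normSq (W i j))
    calc ∑ i, ∑ j, lE i * lM j * Complex.normSq (W i j)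
        = ∑ i, ∑ j, lE (σ i) * lM j * Complex.normSq (W (σ i) j) :=
          (Equiv.sum_comp σ (fun i => ∑ j, lE i * lM j * Complex.normSq (W i j))).symm
      _ = ∑ i, ∑ j, lE (σ i) * lM (π j) * Complex.normSq (W (σ i) (π j)) :=
          Finset.sum_congr rfl fun i _ => (inner (σ i)).symm
  -- nonnegativity of δE, δM
  have hδE0 : ∀ i, 0 ≤ δE i := by
    rw [hσ]; exact fun i => hE.eigenvalues_nonneg _
  have hδM0 : ∀ i, 0 ≤ δM i := by
    rw [hπ]; exact fun i => hM.eigenvalues_nonneg _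
  -- set up ℕ-indexed versions
  set a' : ℕ → ℝ := fun n => if h : n < r then δE ⟨n, h⟩ else 0 with ha_def
  set b' : ℕ → ℝ := fun n => if h : n < r then δM ⟨n, h⟩ else 0 with hb_def
  set S' : ℕ → ℕ → ℝ := fun n m =>
    if h : n < r then (if h2 : m < r then Sf ⟨n, h⟩ ⟨m, h2⟩ else 0) else 0 with hS_def
  have haA : Antitone a' := by
    intro m n hmn
    rw [ha_def]
    by_cases hn : n < r
    · have hm : m < r := lt_of_le_of_lt hmn hn
      simp only [dif_pos hn, dif_pos hm]
      exact hδE (show (⟨m, hm⟩ : Fin r) ≤ ⟨n, hn⟩ from hmn)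
    · simp only [dif_neg hn]
      by_cases hm : m < r
      · simp only [dif_pos hm]; exact hδE0 _
      · simp only [dif_neg hm, le_refl]
  have hbA : Antitone b' := by
    intro m n hmn
    rw [hb_def]
    by_cases hn : n < r
    · have hm : m < r := lt_of_le_of_lt hmn hn
      simp only [dif_pos hn, dif_pos hm]
      exact hδM (show (⟨m, hm⟩ : Fin r) ≤ ⟨n, hn⟩ from hmn)
    · simp only [dif_neg hn]
      by_cases hm : m < r
      · simp only [dif_pos hm]; exact hδM0 _
      · simp only [dif_neg hm, le_refl]
  have har : a' r = 0 := by rw [ha_def]; simp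
  have hbr : b' r = 0 := by rw [hb_def]; simp
  have hS0 : ∀ n m, 0 ≤ S' n m := by
    intro n m
    rw [hS_def]
    by_cases hn : n < r
    · by_cases hm : m < r
      · simp only [dif_pos hn, dif_pos hm, hSf_def]; exact Complex.normSq_nonneg _
      · simp [dif_pos hn, dif_neg hm]
    · simp [dif_neg hn]
  have hrow' : ∀ n, ∑ m ∈ Finset.range r, S' n m ≤ 1 := by
    intro n
    by_cases hn : n < r
    · have : ∑ m ∈ Finset.range r, S' n m = ∑ j : Fin r, Sf ⟨n, hn⟩ j := by
        rw [← Fin.sum_univ_eq_sum_range (fun m => S' n m) r]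
        refine Finset.sum_congr rfl fun j _ => ?_
        rw [hS_def]
        simp only [dif_pos hn, dif_pos j.isLt]
      rw [this]
      have : ∑ j : Fin r, Sf ⟨n, hn⟩ j = 1 := by
        rw [hSf_def]
        rw [Equiv.sum_comp π (fun j => Complex.normSq (W (σ ⟨n, hn⟩) j))]
        exact hrow _
      rw [this]
    · have : ∑ m ∈ Finset.range r, S' n m = 0 := by
        refine Finset.sum_eq_zero fun m _ => ?_
        rw [hS_def]; simp [dif_neg hn]
      rw [this]; norm_num
  have hcol' : ∀ m, ∑ n ∈ Finset.range r, S' n m ≤ 1 := by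
    intro m
    by_cases hm : m < r
    · have : ∑ n ∈ Finset.range r, S' n m = ∑ i : Fin r, Sf i ⟨m, hm⟩ := by
        rw [← Fin.sum_univ_eq_sum_range (fun n => S' n m) r]
        refine Finset.sum_congr rfl fun i _ => ?_
        rw [hS_def]
        simp only [dif_pos hm, dif_pos i.isLt]
      rw [this]
      have : ∑ i : Fin r, Sf i ⟨m, hm⟩ = 1 := by
        rw [hSf_def]
        rw [Equiv.sum_comp σ (fun i => Complex.normSq (W i (π ⟨m, hm⟩)))]
        exact hcol _
      rw [this]
    · have : ∑ n ∈ Finset.range r, S' n m = 0 := by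
        refine Finset.sum_eq_zero fun n _ => ?_
        rw [hS_def]
        by_cases hn : n < r <;> simp [dif_neg hm, hn]
      rw [this]; norm_num
  -- apply the key lemma
  have hkey := vn_key r a' b' S' haA hbA har hbr hS0 hrow' hcol'
  -- translate the sums
  have hL : ∑ n ∈ Finset.range r, ∑ m ∈ Finset.range r, a' n * b' m * S' n m
      = ∑ i, ∑ j, δE i * δM j * Sf i j := by
    rw [← Fin.sum_univ_eq_sum_range (fun n => ∑ m ∈ Finset.range r, a' n * b' m * S' n m) r]
    refine Finset.sum_congr rfl fun i _ => ?_
    rw [← Fin.sum_univ_eq_sum_range (fun m => a' ↑i * b' m * S' ↑i m) r]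
    refine Finset.sum_congr rfl fun j _ => ?_
    rw [ha_def, hb_def, hS_def]
    simp only [dif_pos i.isLt, dif_pos j.isLt]
  have hR : ∑ n ∈ Finset.range r, a' n * b' n = ∑ i, δE i * δM i := by
    rw [← Fin.sum_univ_eq_sum_range (fun n => a' n * b' n) r]
    refine Finset.sum_congr rfl fun i _ => ?_
    rw [ha_def, hb_def]
    simp only [dif_pos i.isLt]
  rw [hL, hR] at hkey
  rw [htrT]
  have hT_le : T ≤ ∑ i, δE i * δM i := by rw [hreindex]; exact hkey
  exact_mod_cast hT_le
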